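/- (Laurent functional calculus for Υ and the Christoffel-perturbed moment matrix.) (i) For every r ≥ 1, every Laurent polynomial P(z) = ∑_{i=−d}^{d} P_i z^i with complex coefficients, every z ∈ ℂ∖{0} and all n ∈ ℕ, a ∈ {0,…,r−1}: ∑_{m∈ℕ} P(Υ_{[r]})(n,m)·Z_{[r]}(z)(m,a) = P(z)·Z_{[r]}(z)(n,a), where P(Υ_{[r]}) := ∑_{i=−d}^{d} P_i·Υ_{[r]}^{i} with Υ_{[r]}^{−i} := (Υ_{[r]}ᵀ)^{i}. (ii) For q,p ≥ 1, Laurent polynomials W_b(z) = ∑_{i=−d}^{d} ω_{b,i} z^i (b ∈ {0,…,q−1}) and any moment sequence c, the Christoffel-perturbed moment matrix factorizes as M_ĉ = 𝒲·M_c, entrywise with finite sums. -/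

import Mathlib

noncomputable section

/-- CMV exponent sequence 0, -1, 1, -2, 2, … : e(2k)=k, e(2k+1)=-(k+1). -/
def cmvE (n : ℕ) : ℤ := if n % 2 = 0 then ((n / 2 : ℕ) : ℤ) else -(((n / 2 : ℕ) : ℤ) + 1)

/-- The semi-infinite 0–1 matrix Υ_{[r]}. -/
def Ups (r : ℕ) : ℕ → ℕ → ℂ := fun n m =>
  if n % r = m % r ∧ cmvE (m / r) = cmvE (n / r) + 1 then 1 else 0

/-- The intertwining matrix η_{[r]}. -/
def Eta (r : ℕ) : ℕ → ℕ → ℂ := fun n m =>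
  if n % r = m % r ∧ cmvE (m / r) = -cmvE (n / r) then 1 else 0

/-- The untangling matrix ν_{[r]}. -/
def Nu (r : ℕ) : ℕ → ℕ → ℂ := fun n m =>
  if n % r = m % r ∧ cmvE (m / r) = -cmvE (n / r) - 1 then 1 else 0

/-- Entrywise product of semi-infinite matrices (entrywise finite sums in all uses below). -/
def mprod (A B : ℕ → ℕ → ℂ) : ℕ → ℕ → ℂ := fun n m => ∑' k, A n k * B k m

/-- The semi-infinite identity matrix. -/
def mid : ℕ → ℕ → ℂ := fun n m => if n = m then 1 else 0

/-- Transpose of a semi-infinite matrix. -/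
def mtrans (A : ℕ → ℕ → ℂ) : ℕ → ℕ → ℂ := fun n m => A m n

/-- Powers of a semi-infinite matrix. -/
def mpow (A : ℕ → ℕ → ℂ) : ℕ → ℕ → ℕ → ℂ
  | 0 => mid
  | d + 1 => mprod A (mpow A d)

/-- The CMV monomial matrix Z_{[r]}(z). -/
def cmvZ (r : ℕ) (z : ℂ) : ℕ → ℕ → ℂ := fun n a =>
  if n % r = a then z ^ cmvE (n / r) else 0

def LowerTri (L : ℕ → ℕ → ℂ) : Prop := ∀ n m, n < m → L n m = 0

def UpperTri (U : ℕ → ℕ → ℂ) : Prop := ∀ n m, m < n → U n m = 0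

/-- The left CMV moment matrix M_c. -/
def cmvM {q p : ℕ} (hq : 0 < q) (hp : 0 < p)
    (c : ℤ → Matrix (Fin q) (Fin p) ℂ) : ℕ → ℕ → ℂ := fun n m =>
  c (cmvE (n / q) - cmvE (m / p)) ⟨n % q, Nat.mod_lt _ hq⟩ ⟨m % p, Nat.mod_lt _ hp⟩

/-- The right CMV moment matrix 𝓜_c. -/
def cmvMR {q p : ℕ} (hq : 0 < q) (hp : 0 < p)
    (c : ℤ → Matrix (Fin q) (Fin p) ℂ) : ℕ → ℕ → ℂ := fun n m =>
  c (cmvE (m / p) - cmvE (n / q)) ⟨n % q, Nat.mod_lt _ hq⟩ ⟨m % p, Nat.mod_lt _ hp⟩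

/-- Integer powers of Υ_{[r]}, with Υ_{[r]}^{-i} := (Υ_{[r]}ᵀ)^{i}. -/
def UpsZ (r : ℕ) (i : ℤ) : ℕ → ℕ → ℂ :=
  if 0 ≤ i then mpow (Ups r) i.toNat else mpow (mtrans (Ups r)) (-i).toNat

/-- The matrix 𝒲 = ∑_{b=0}^{q-1} ∑_{i=-d}^{d} ω_{b,i}·Υ_{[q]}^{i}·I^{(b)}, where I^{(b)} is the
diagonal 0–1 matrix selecting the indices n ≡ b (mod q). -/
def Wcal (q d : ℕ) (ω : ℕ → ℤ → ℂ) : ℕ → ℕ → ℂ := fun n m =>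
  ∑ b ∈ Finset.range q, ∑ i ∈ Finset.Icc (-(d : ℤ)) (d : ℤ),
    ω b i * (UpsZ q i n m * (if m % q = b then 1 else 0))

/-- The Christoffel-perturbed moments ĉ(n)(b,a) := ∑_{i=-d}^{d} ω_{b,i}·c(n+i)(b,a). -/
def chat (q p d : ℕ) (ω : ℕ → ℤ → ℂ) (c : ℤ → Matrix (Fin q) (Fin p) ℂ) :
    ℤ → Matrix (Fin q) (Fin p) ℂ := fun n =>
  Matrix.of fun b a => ∑ i ∈ Finset.Icc (-(d : ℤ)) (d : ℤ), ω b.1 i * c (n + i) b a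

/-!
`Υ_{[r]}^i` is the permutation matrix of the bijection of `ℕ` that keeps the residue mod `r` and
adds `i` to the CMV exponent `e(⌊n/r⌋)` of the block. Multiplying by it therefore just evaluates at
the shifted index: on `Z_{[r]}(z)` this multiplies by `z^i`, and on the rows of `M_c` it shifts
the moment index by `i`, which is exactly how `ĉ` is built from `c`.
-/

open Finset

def cmvEEquiv : ℕ ≃ ℤ where
  toFun := cmvE
  invFun j := if 0 ≤ j then 2 * j.toNat else 2 * (-j).toNat - 1
  left_inv n := by simp only [cmvE]; split_ifs <;> omega
  right_inv j := by simp only [cmvE]; split_ifs <;> omega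

@[simp]
lemma cmvEEquiv_apply (n : ℕ) : cmvEEquiv n = cmvE n := rfl

def cmvShift (r : ℕ) (j : ℤ) (n : ℕ) : ℕ := cmvEEquiv.symm (cmvE (n / r) + j) * r + n % r

def funMat (f : ℕ → ℕ) : ℕ → ℕ → ℂ := fun n m => if m = f n then 1 else 0

lemma hasSum_funMat_mul (f : ℕ → ℕ) (n : ℕ) (v : ℕ → ℂ) :
    HasSum (fun m => funMat f n m * v m) (v (f n)) := by
  have h := hasSum_single (f := fun m => funMat f n m * v m) (f n) fun m hm => by
    simp [funMat, hm]
  simpa [funMat] using h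

lemma mpow_funMat (f : ℕ → ℕ) (k : ℕ) : mpow (funMat f) k = funMat f^[k] := by
  induction k with
  | zero => funext n m; simp [mpow, mid, funMat, eq_comm]
  | succ k ih =>
    funext n m
    rw [mpow, ih, mprod, (hasSum_funMat_mul f n _).tsum_eq, funMat, funMat,
      Function.iterate_succ_apply]

section cmvShift

variable {r : ℕ}

@[simp]
lemma cmvShift_mod (j : ℤ) (n : ℕ) : cmvShift r j n % r = n % r := by
  rw [cmvShift, mul_comm, Nat.mul_add_mod, Nat.mod_mod]

@[simp]
lemma cmvE_cmvShift_div (hr : 0 < r) (j : ℤ) (n : ℕ) :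
    cmvE (cmvShift r j n / r) = cmvE (n / r) + j := by
  rw [cmvShift, mul_comm, Nat.mul_add_div hr, Nat.div_eq_of_lt (Nat.mod_lt _ hr), add_zero,
    ← cmvEEquiv_apply, Equiv.apply_symm_apply]

lemma eq_cmvShift_iff (hr : 0 < r) (j : ℤ) (n m : ℕ) :
    m = cmvShift r j n ↔ m % r = n % r ∧ cmvE (m / r) = cmvE (n / r) + j := by
  refine ⟨?_, fun ⟨hmod, hdiv⟩ => ?_⟩
  · rintro rfl
    exact ⟨cmvShift_mod j n, cmvE_cmvShift_div hr j n⟩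
  · rw [cmvShift, ← hdiv, ← hmod, ← cmvEEquiv_apply, Equiv.symm_apply_apply, Nat.div_add_mod']

lemma cmvShift_cmvShift (hr : 0 < r) (i j : ℤ) (n : ℕ) :
    cmvShift r j (cmvShift r i n) = cmvShift r (i + j) n :=
  ((eq_cmvShift_iff hr _ _ _).2 ⟨by simp, by simp [hr, add_assoc]⟩).symm

lemma iterate_cmvShift (hr : 0 < r) (j : ℤ) (k : ℕ) :
    (cmvShift r j)^[k] = cmvShift r (k * j) := by
  induction k with
  | zero => funext n; exact (eq_cmvShift_iff hr _ _ _).2 ⟨rfl, by simp⟩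
  | succ k ih =>
    funext n
    rw [Function.iterate_succ_apply', ih, cmvShift_cmvShift hr]
    push_cast; ring_nf

lemma Ups_eq_funMat (hr : 0 < r) : Ups r = funMat (cmvShift r 1) := by
  funext n m
  simp only [Ups, funMat, eq_cmvShift_iff hr, eq_comm (a := n % r)]

lemma mtrans_Ups_eq_funMat (hr : 0 < r) : mtrans (Ups r) = funMat (cmvShift r (-1)) := by
  funext n m
  simp only [mtrans, Ups, funMat, eq_cmvShift_iff hr]
  congr 1
  exact propext ⟨fun ⟨h₁, h₂⟩ => ⟨h₁, by omega⟩, fun ⟨h₁, h₂⟩ => ⟨h₁, by omega⟩⟩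

lemma UpsZ_eq_funMat (hr : 0 < r) (i : ℤ) : UpsZ r i = funMat (cmvShift r i) := by
  funext n m
  rcases le_or_gt 0 i with hi | hi
  · rw [UpsZ, if_pos hi, Ups_eq_funMat hr, mpow_funMat, iterate_cmvShift hr,
      Int.toNat_of_nonneg hi, mul_one]
  · rw [UpsZ, if_neg hi.not_ge, mtrans_Ups_eq_funMat hr, mpow_funMat, iterate_cmvShift hr]
    congr 3
    omega

lemma hasSum_UpsZ_mul (hr : 0 < r) (i : ℤ) (n : ℕ) (v : ℕ → ℂ) :
    HasSum (fun m => UpsZ r i n m * v m) (v (cmvShift r i n)) := by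
  rw [UpsZ_eq_funMat hr]
  exact hasSum_funMat_mul _ n v

lemma tsum_laurent_UpsZ_mul (hr : 0 < r) (s : Finset ℤ) (P : ℤ → ℂ) (n : ℕ)
    (v : ℕ → ℂ) :
    ∑' m, (∑ i ∈ s, P i * UpsZ r i n m) * v m = ∑ i ∈ s, P i * v (cmvShift r i n) := by
  have h := hasSum_sum (s := s) fun i _ => (hasSum_UpsZ_mul hr i n v).mul_left (P i)
  simp only [← mul_assoc, ← sum_mul] at h
  exact h.tsum_eq

lemma UpsZ_eq_zero_of_mod_ne (hr : 0 < r) (i : ℤ) {n k : ℕ} (h : k % r ≠ n % r) :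
    UpsZ r i n k = 0 := by
  rw [UpsZ_eq_funMat hr, funMat, if_neg]
  rintro rfl
  exact h (cmvShift_mod i n)

lemma cmvZ_cmvShift (hr : 0 < r) {z : ℂ} (hz : z ≠ 0) (i : ℤ) (n a : ℕ) :
    cmvZ r z (cmvShift r i n) a = z ^ i * cmvZ r z n a := by
  simp only [cmvZ, cmvShift_mod, cmvE_cmvShift_div hr, zpow_add₀ hz]
  split_ifs <;> ring

end cmvShift

lemma Wcal_eq_sum_UpsZ {q : ℕ} (hq : 0 < q) (d : ℕ) (ω : ℕ → ℤ → ℂ) (n k : ℕ) :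
    Wcal q d ω n k = ∑ i ∈ Icc (-(d : ℤ)) d, ω (n % q) i * UpsZ q i n k := by
  have hselect : ∀ i b, UpsZ q i n k * (if k % q = b then 1 else 0)
      = if n % q = b then UpsZ q i n k else 0 := by
    intro i b
    by_cases hk : k % q = n % q
    · simp [hk]
    · simp [UpsZ_eq_zero_of_mod_ne hq i hk]
  rw [Wcal, sum_comm]
  refine sum_congr rfl fun i _ => ?_
  simp only [hselect, mul_ite, mul_zero, sum_ite_eq, mem_range, Nat.mod_lt n hq, if_true]

lemma cmvM_chat {q p : ℕ} (hq : 0 < q) (hp : 0 < p) (d : ℕ) (ω : ℕ → ℤ → ℂ)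
    (c : ℤ → Matrix (Fin q) (Fin p) ℂ) (n m : ℕ) :
    cmvM hq hp (chat q p d ω c) n m
      = ∑ i ∈ Icc (-(d : ℤ)) d, ω (n % q) i * cmvM hq hp c (cmvShift q i n) m := by
  simp only [cmvM, chat, Matrix.of_apply, cmvShift_mod, cmvE_cmvShift_div hq]
  refine sum_congr rfl fun i _ => ?_
  congr 2
  ring

/-- Laurent functional calculus for Υ and the Christoffel-perturbed
moment matrix, M_ĉ = 𝒲·M_c. -/
theorem stmt_17 :
    (∀ r : ℕ, 1 ≤ r → ∀ d : ℕ, ∀ Pc : ℤ → ℂ, ∀ z : ℂ, z ≠ 0 → ∀ n a : ℕ, a < r →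
      (∑' m, (∑ i ∈ Finset.Icc (-(d : ℤ)) (d : ℤ), Pc i * UpsZ r i n m) * cmvZ r z m a)
        = (∑ i ∈ Finset.Icc (-(d : ℤ)) (d : ℤ), Pc i * z ^ i) * cmvZ r z n a) ∧
    (∀ q p : ℕ, ∀ hq : 0 < q, ∀ hp : 0 < p, ∀ d : ℕ, 1 ≤ d → ∀ ω : ℕ → ℤ → ℂ,
      ∀ c : ℤ → Matrix (Fin q) (Fin p) ℂ, ∀ n m : ℕ,
        cmvM hq hp (chat q p d ω c) n m = ∑' k, Wcal q d ω n k * cmvM hq hp c k m) := by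
  refine ⟨fun r hr d Pc z hz n a _ => ?_, fun q p hq hp d _ ω c n m => ?_⟩
  · rw [tsum_laurent_UpsZ_mul hr, sum_mul]
    simp only [cmvZ_cmvShift hr hz, mul_assoc]
  · simp only [Wcal_eq_sum_UpsZ hq, tsum_laurent_UpsZ_mul hq, cmvM_chat]
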